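/- arXiv:math/9302209 — 2 statements merged into one kernel-verified Lean document; each statement's English description precedes it below -/
import Mathlib

section
/- Let E be a reflexive real Banach space and T : E → 2^{E*} a coercive maximal monotone operator. Then R(T) = E*. -/
/-!
The proof runs through the Simons–Zălinescu form of Rockafellar's surjectivity theorem: a maximal
monotone `G` contains some `(x, v)` with `v x + ‖x‖²/2 + ‖v‖²/2 ≤ 0`. Maximality puts the epigraph
of the Fitzpatrick function of `G` above the graph of `-(‖x‖²/2 + ‖v‖²/2)`. A hyperplane separating
the two is given by some `a ∈ E*`, some element of `E**`, which reflexivity writes as `z ∈ E`, and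
a level `s`; the conjugate of `‖·‖²/2` being `‖·‖²/2`, the point `((-z, -a), -s)` of the epigraph
lies on or below that graph, and such points belong to `G`.

Applied to the graph of `(T - w) / ε`, this gives `v_ε ∈ T x_ε` with `(v_ε - w) x_ε ≤ 0` and
`‖v_ε - w‖ = ε ‖x_ε‖`. Coercivity bounds `x_ε`, so the `x_ε` have a weak cluster point `x₀`, and
since `v_ε → w` in norm, the monotonicity inequalities pass to the limit: `w ∈ T x₀`.
-/

open NormedSpace Filter Topology

section Normed

variable {X : Type*} [NormedAddCommGroup X] [NormedSpace ℝ X]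

theorem neg_half_sq_norm_add_le_apply (x : X) (a : StrongDual ℝ X) :
    -(‖x‖ ^ 2 / 2 + ‖a‖ ^ 2 / 2) ≤ a x := by
  have h := (neg_abs_le (a x)).trans' (neg_le_neg (a.le_opNorm x))
  nlinarith [sq_nonneg (‖x‖ - ‖a‖)]

theorem apply_nonpos_and_norm_eq_of_apply_add_half_sq_le_zero {x : X} {a : StrongDual ℝ X}
    (h : a x + ‖x‖ ^ 2 / 2 + ‖a‖ ^ 2 / 2 ≤ 0) : a x ≤ 0 ∧ ‖a‖ = ‖x‖ := by
  have hle := (neg_abs_le (a x)).trans' (neg_le_neg (a.le_opNorm x))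
  refine ⟨by nlinarith, ?_⟩
  nlinarith [sq_nonneg (‖x‖ - ‖a‖)]

theorem half_sq_opNorm_le_of_forall_apply_sub_le {a : StrongDual ℝ X} {c : ℝ}
    (h : ∀ x, a x - ‖x‖ ^ 2 / 2 ≤ c) : ‖a‖ ^ 2 / 2 ≤ c := by
  have hc : 0 ≤ c := by simpa using h 0
  have hsq : ∀ x, (a x) ^ 2 ≤ 2 * c * ‖x‖ ^ 2 := fun x => by
    have := discrim_le_zero (a := ‖x‖ ^ 2 / 2) (b := -a x) (c := c) fun t => by
      have := h (t • x)
      rw [map_smul, smul_eq_mul, norm_smul, Real.norm_eq_abs, mul_pow, sq_abs] at this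
      linarith
    rw [discrim] at this
    linarith
  have hnorm : ‖a‖ ≤ √(2 * c) := a.opNorm_le_bound (Real.sqrt_nonneg _) fun x => by
    rw [Real.norm_eq_abs, ← Real.sqrt_sq (norm_nonneg x), ← Real.sqrt_mul (by positivity)]
    exact Real.abs_le_sqrt (hsq x)
  have := pow_le_pow_left₀ (norm_nonneg a) hnorm 2
  rw [Real.sq_sqrt (by positivity)] at this
  linarith

theorem half_sq_opNorm_add_half_sq_norm_le {a : StrongDual ℝ X} {z : X} {s : ℝ}
    (h : ∀ x (v : StrongDual ℝ X), a x + v z - (‖x‖ ^ 2 / 2 + ‖v‖ ^ 2 / 2) ≤ s) :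
    ‖a‖ ^ 2 / 2 + ‖z‖ ^ 2 / 2 ≤ s := by
  have ha : ∀ v : StrongDual ℝ X, v z - ‖v‖ ^ 2 / 2 ≤ s - ‖a‖ ^ 2 / 2 := fun v => by
    have := half_sq_opNorm_le_of_forall_apply_sub_le (a := a) (c := s - (v z - ‖v‖ ^ 2 / 2))
      fun x => by linarith [h x v]
    linarith
  have hz := half_sq_opNorm_le_of_forall_apply_sub_le (a := inclusionInDoubleDual ℝ X z) ha
  rw [show ‖inclusionInDoubleDual ℝ X z‖ = ‖z‖ from (inclusionInDoubleDualLi ℝ).norm_map z] at hz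
  linarith

theorem convexOn_univ_half_sq_norm : ConvexOn ℝ Set.univ (fun x : X => ‖x‖ ^ 2 / 2) := by
  have h := ((convexOn_univ_norm (E := X)).pow (fun x _ => norm_nonneg x) 2).smul
    (c := (1 / 2 : ℝ)) (by norm_num)
  have heq : (fun x : X => ‖x‖ ^ 2 / 2) = fun x => (1 / 2 : ℝ) • (norm ^ 2) x := by
    ext x
    simp only [Pi.pow_apply, smul_eq_mul]
    ring
  rwa [heq]

end Normed

theorem le_of_mapClusterPt_of_le_add {ι : Type*} {l : Filter ι} {u δ : ι → ℝ} {a c : ℝ}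
    (hu : MapClusterPt a l u) (hδ : Tendsto δ l (𝓝 0)) (h : ∀ i, c ≤ u i + δ i) : c ≤ a := by
  by_contra! hac
  have hε : 0 < (c - a) / 2 := half_pos (sub_pos.2 hac)
  have hfreq := mapClusterPt_iff_frequently.1 hu _ (Iio_mem_nhds (lt_add_of_pos_right a hε))
  obtain ⟨i, hui, hδi⟩ := (hfreq.and_eventually (hδ (Iio_mem_nhds hε))).exists
  have := h i
  simp only [Set.mem_Iio] at hui hδi
  linarith

section Separation

variable {F : Type*} [NormedAddCommGroup F] [NormedSpace ℝ F]

theorem apply_mk_eq_add_mul (f : StrongDual ℝ (F × ℝ)) (x : F) (t : ℝ) :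
    f (x, t) = f (x, 0) + t * f (0, 1) := by
  rw [show (x, t) = (x, (0 : ℝ)) + t • ((0 : F), (1 : ℝ)) by simp, map_add, map_smul, smul_eq_mul]

theorem apply_zero_one_pos_of_lt_of_le {h : F → ℝ} {f : StrongDual ℝ (F × ℝ)} {s : ℝ}
    {c : F × ℝ} (hlt : ∀ x t, t < -h x → f (x, t) < s) (hle : s ≤ f c) : 0 < f (0, 1) := by
  have hc := apply_mk_eq_add_mul f c.1
  rcases lt_trichotomy (f (0, 1)) 0 with hβ | hβ | hβ
  · set t := min (-h c.1 - 1) ((s - f (c.1, 0)) / f (0, 1))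
    have h1 := hlt c.1 t ((min_le_left _ _).trans_lt (by linarith))
    have h2 : (s - f (c.1, 0)) / f (0, 1) * f (0, 1) ≤ t * f (0, 1) :=
      mul_le_mul_of_nonpos_right (min_le_right _ _) hβ.le
    rw [div_mul_cancel₀ _ hβ.ne] at h2
    linarith [hc t]
  · have h1 := hlt c.1 (-h c.1 - 1) (by linarith)
    rw [hc, hβ] at h1 hle
    linarith [hc c.2]
  · exact hβ

theorem exists_affine_between_of_convexOn {h : F → ℝ} (hconv : ConvexOn ℝ Set.univ h)
    (hcont : Continuous h) {C : Set (F × ℝ)} (hC : Convex ℝ C) (hne : C.Nonempty)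
    (hle : ∀ p ∈ C, 0 ≤ h p.1 + p.2) :
    ∃ (g : StrongDual ℝ F) (s : ℝ), (∀ x, g x - h x ≤ s) ∧ ∀ p ∈ C, s ≤ g p.1 + p.2 := by
  set U : Set (F × ℝ) := {p | p.1 ∈ Set.univ ∧ p.2 < -h p.1}
  have hUo : IsOpen U := by
    simpa [U] using isOpen_lt continuous_snd (hcont.comp continuous_fst).neg
  have hdisj : Disjoint U C :=
    Set.disjoint_left.2 fun p hpU hpC => (hle p hpC).not_gt (by linarith [hpU.2])
  obtain ⟨f, s, hfU, hfC⟩ :=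
    geometric_hahn_banach_open hconv.neg.convex_strict_hypograph hUo hC hdisj
  have hbelow : ∀ x t, t < -h x → f (x, t) < s := fun x t ht => hfU (x, t) ⟨trivial, ht⟩
  obtain ⟨c, hc⟩ := hne
  have hβ := apply_zero_one_pos_of_lt_of_le hbelow (hfC c hc)
  set g : StrongDual ℝ F := f.comp (ContinuousLinearMap.inl ℝ F ℝ)
  have hf : ∀ x t, f (x, t) = g x + t * f (0, 1) := apply_mk_eq_add_mul f
  refine ⟨(f (0, 1))⁻¹ • g, s / f (0, 1), fun x => ?_, fun p hp => ?_⟩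
  · have hlim : Tendsto (fun t => f (x, t)) (𝓝[<] (-h x)) (𝓝 (f (x, -h x))) :=
      ((f.continuous.comp (Continuous.prodMk_right x)).tendsto _).mono_left nhdsWithin_le_nhds
    have := le_of_tendsto hlim (eventually_nhdsWithin_of_forall fun t ht => (hbelow x t ht).le)
    rw [hf] at this
    rw [le_div_iff₀ hβ, smul_apply, smul_eq_mul]
    field_simp
    linarith
  · have := hf p.1 p.2 ▸ hfC p hp
    rw [div_le_iff₀ hβ, smul_apply, smul_eq_mul]
    field_simp
    linarith

end Separation

theorem exists_mapClusterPt_toWeakSpace_of_norm_le {E : Type*} [NormedAddCommGroup E]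
    [NormedSpace ℝ E] (hrefl : Function.Surjective (inclusionInDoubleDual ℝ E))
    {ι : Type*} {l : Filter ι} [l.NeBot] {x : ι → E} {R : ℝ} (hx : ∀ i, ‖x i‖ ≤ R) :
    ∃ x₀ : E, MapClusterPt (toWeakSpace ℝ E x₀) l fun i => toWeakSpace ℝ E (x i) := by
  set S : Set (WeakSpace ℝ E) := Set.range fun i => toWeakSpace ℝ E (x i)
  have hS : IsCompact (closure S) := by
    refine isCompact_closure_of_isBounded ℝ E S ?_ fun φ _ => ?_
    · exact isBounded_iff_forall_norm_le.2 ⟨R, by rintro _ ⟨i, rfl⟩; exact hx i⟩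
    · obtain ⟨z, hz⟩ := hrefl (WeakDual.toStrongDual φ)
      exact ⟨toWeakSpace ℝ E z, congrArg StrongDual.toWeakDual hz⟩
  obtain ⟨x₀, -, hx₀⟩ := hS.exists_mapClusterPt (f := l)
    (le_principal_iff.2 (mem_map.2 (Eventually.of_forall fun i => subset_closure ⟨i, rfl⟩)))
  exact ⟨(toWeakSpace ℝ E).symm x₀, hx₀⟩

section MaximalMonotone

variable {E : Type*} [NormedAddCommGroup E] [NormedSpace ℝ E]

/-- Monotonicity and maximality in one condition: `G` consists exactly of the pairs that are
monotonically related to every pair of `G`. -/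
def IsMaximalMonotone (G : Set (E × StrongDual ℝ E)) : Prop :=
  ∀ p, p ∈ G ↔ ∀ q ∈ G, 0 ≤ (p.2 - q.2) (p.1 - q.1)

def fitzpatrickEpigraph (G : Set (E × StrongDual ℝ E)) : Set ((E × StrongDual ℝ E) × ℝ) :=
  {p | ∀ q ∈ G, q.2 p.1.1 + p.1.2 q.1 - q.2 q.1 ≤ p.2}

theorem convex_fitzpatrickEpigraph (G : Set (E × StrongDual ℝ E)) :
    Convex ℝ (fitzpatrickEpigraph G) := by
  intro p hp p' hp' a b ha hb hab q hq
  have hsplit : q.2 q.1 = a * q.2 q.1 + b * q.2 q.1 := by rw [← add_mul, hab, one_mul]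
  simp only [Prod.fst_add, Prod.snd_add, Prod.smul_fst, Prod.smul_snd, map_add, map_smul,
    add_apply, FunLike.coe_smul, Pi.smul_apply, smul_eq_mul]
  nlinarith [mul_le_mul_of_nonneg_left (hp q hq) ha, mul_le_mul_of_nonneg_left (hp' q hq) hb]

namespace IsMaximalMonotone

variable {G : Set (E × StrongDual ℝ E)}

theorem nonempty (hG : IsMaximalMonotone G) : G.Nonempty := by
  by_contra hne
  exact hne ⟨0, (hG 0).2 fun q hq => (hne ⟨q, hq⟩).elim⟩

theorem preimage_smul_add (hG : IsMaximalMonotone G) (w : StrongDual ℝ E) {ε : ℝ}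
    (hε : 0 < ε) : IsMaximalMonotone {p : E × StrongDual ℝ E | (p.1, ε • p.2 + w) ∈ G} := by
  have hpair : ∀ (u u' : StrongDual ℝ E) (z : E),
      (ε • u + w - (ε • u' + w)) z = ε * (u - u') z := fun u u' z => by
    simp [mul_sub]
  intro p
  rw [Set.mem_ofPred_eq, hG]
  constructor
  · intro h q hq
    have := h _ hq
    rw [hpair] at this
    exact (mul_nonneg_iff_of_pos_left hε).1 this
  · intro h q hq
    have hq' : q.2 = ε • (ε⁻¹ • (q.2 - w)) + w := by rw [smul_inv_smul₀ hε.ne', sub_add_cancel]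
    have := h (q.1, ε⁻¹ • (q.2 - w)) (by rw [Set.mem_ofPred_eq, ← hq']; exact hq)
    rw [hq', hpair]
    exact mul_nonneg hε.le this

theorem mk_mem_fitzpatrickEpigraph (hG : IsMaximalMonotone G) {q : E × StrongDual ℝ E}
    (hq : q ∈ G) : (q, q.2 q.1) ∈ fitzpatrickEpigraph G := fun r hr => by
  have := (hG q).1 hq r hr
  simp only [sub_apply, map_sub] at this ⊢
  linarith

theorem mem_of_mem_fitzpatrickEpigraph (hG : IsMaximalMonotone G)
    {p : (E × StrongDual ℝ E) × ℝ} (hp : p ∈ fitzpatrickEpigraph G) (hle : p.2 ≤ p.1.2 p.1.1) :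
    p.1 ∈ G :=
  (hG p.1).2 fun q hq => by
    have := hp q hq
    simp only [sub_apply, map_sub]
    linarith

theorem apply_le_of_mem_fitzpatrickEpigraph (hG : IsMaximalMonotone G)
    {p : (E × StrongDual ℝ E) × ℝ} (hp : p ∈ fitzpatrickEpigraph G) : p.1.2 p.1.1 ≤ p.2 := by
  by_contra! hlt
  have := hp p.1 (hG.mem_of_mem_fitzpatrickEpigraph hp hlt.le)
  linarith

/-- Simons–Zălinescu: `-p.2` lies in the duality map `J p.1`, so `0 ∈ (G + J) p.1`. -/
theorem exists_apply_add_half_sq_le_zero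
    (hrefl : Function.Surjective (inclusionInDoubleDual ℝ E)) (hG : IsMaximalMonotone G) :
    ∃ p ∈ G, p.2 p.1 + ‖p.1‖ ^ 2 / 2 + ‖p.2‖ ^ 2 / 2 ≤ 0 := by
  set h : E × StrongDual ℝ E → ℝ := fun p => ‖p.1‖ ^ 2 / 2 + ‖p.2‖ ^ 2 / 2
  have hconv : ConvexOn ℝ Set.univ h :=
    (convexOn_univ_half_sq_norm.comp_linearMap (LinearMap.fst ℝ _ _)).add
      (convexOn_univ_half_sq_norm.comp_linearMap (LinearMap.snd ℝ _ _))
  have hC : ∀ p ∈ fitzpatrickEpigraph G, 0 ≤ h p.1 + p.2 := fun p hp => by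
    simp only [h]
    linarith [hG.apply_le_of_mem_fitzpatrickEpigraph hp,
      neg_half_sq_norm_add_le_apply p.1.1 p.1.2]
  obtain ⟨q, hq⟩ := hG.nonempty
  obtain ⟨g, s, hgh, hgC⟩ := exists_affine_between_of_convexOn hconv (by fun_prop)
    (convex_fitzpatrickEpigraph G) ⟨_, hG.mk_mem_fitzpatrickEpigraph hq⟩ hC
  simp only [h] at hgh
  set a : StrongDual ℝ E := g.comp (ContinuousLinearMap.inl ℝ E (StrongDual ℝ E))
  set b : StrongDual ℝ (StrongDual ℝ E) := g.comp (ContinuousLinearMap.inr ℝ E (StrongDual ℝ E))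
  obtain ⟨z, hz⟩ := hrefl b
  have hg : ∀ x v, g (x, v) = a x + v z := fun x v => by
    rw [← dual_def ℝ E z v, hz, show (x, v) = (x, 0) + (0, v) by simp, map_add]
    rfl
  have hnorm : ‖a‖ ^ 2 / 2 + ‖z‖ ^ 2 / 2 ≤ s :=
    half_sq_opNorm_add_half_sq_norm_le fun x v => by linarith [hg x v ▸ hgh (x, v)]
  have hmem : ((-z, -a), -s) ∈ fitzpatrickEpigraph G := fun r hr => by
    have := hg r.1 r.2 ▸ hgC _ (hG.mk_mem_fitzpatrickEpigraph hr)
    simp only [map_neg, neg_apply]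
    linarith
  have hpair := neg_half_sq_norm_add_le_apply (-z) (-a)
  have hle := hG.apply_le_of_mem_fitzpatrickEpigraph hmem
  simp only [norm_neg] at hpair hle
  refine ⟨(-z, -a), hG.mem_of_mem_fitzpatrickEpigraph hmem (by simp only; linarith), ?_⟩
  simp only [norm_neg]
  linarith

theorem exists_mem_norm_sub_eq_smul
    (hrefl : Function.Surjective (inclusionInDoubleDual ℝ E)) (hG : IsMaximalMonotone G)
    (w : StrongDual ℝ E) {ε : ℝ} (hε : 0 < ε) :
    ∃ p ∈ G, (p.2 - w) p.1 ≤ 0 ∧ ‖p.2 - w‖ = ε * ‖p.1‖ := by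
  obtain ⟨p, hp, hle⟩ := (hG.preimage_smul_add w hε).exists_apply_add_half_sq_le_zero hrefl
  obtain ⟨hpair, hnorm⟩ := apply_nonpos_and_norm_eq_of_apply_add_half_sq_le_zero hle
  refine ⟨(p.1, ε • p.2 + w), hp, ?_, ?_⟩
  · simpa [add_sub_cancel_right] using mul_nonpos_of_nonneg_of_nonpos hε.le hpair
  · simp [norm_smul, hnorm, abs_of_pos hε]

theorem mem_of_mapClusterPt (hG : IsMaximalMonotone G) {ι : Type*} {l : Filter ι}
    {x : ι → E} {v : ι → StrongDual ℝ E} {R : ℝ} {x₀ : E} {w : StrongDual ℝ E}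
    (hxv : ∀ i, (x i, v i) ∈ G) (hx : ∀ i, ‖x i‖ ≤ R) (hv : Tendsto v l (𝓝 w))
    (hx₀ : MapClusterPt (toWeakSpace ℝ E x₀) l fun i => toWeakSpace ℝ E (x i)) :
    (x₀, w) ∈ G := by
  refine (hG _).2 fun q hq => ?_
  set f := w - q.2
  have hf : Continuous fun y : WeakSpace ℝ E => f ((toWeakSpace ℝ E).symm y) :=
    WeakBilin.eval_continuous _ f
  have hfx₀ : MapClusterPt (f x₀) l fun i => f (x i) := by
    simpa [Function.comp_def] using hx₀.continuousAt_comp hf.continuousAt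
  have hδ : Tendsto (fun i => ‖v i - w‖ * (R + ‖q.1‖)) l (𝓝 0) := by
    simpa using (tendsto_iff_norm_sub_tendsto_zero.1 hv).mul_const (R + ‖q.1‖)
  have hlow : ∀ i, f q.1 ≤ f (x i) + ‖v i - w‖ * (R + ‖q.1‖) := fun i => by
    have hmono : 0 ≤ (v i - q.2) (x i - q.1) := (hG _).1 (hxv i) q hq
    have hbound : |(v i - w) (x i - q.1)| ≤ ‖v i - w‖ * (R + ‖q.1‖) :=
      ((v i - w).le_opNorm _).trans (mul_le_mul_of_nonneg_left
        ((norm_sub_le _ _).trans (by linarith [hx i])) (norm_nonneg _))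
    have hsplit : f (x i) - f q.1 = (v i - q.2) (x i - q.1) - (v i - w) (x i - q.1) := by
      simp only [f, sub_apply, map_sub]
      ring
    linarith [le_abs_self ((v i - w) (x i - q.1))]
  have := le_of_mapClusterPt_of_le_add hfx₀ hδ hlow
  show 0 ≤ f (x₀ - q.1)
  rw [map_sub]
  linarith

end IsMaximalMonotone

def IsCoerciveOperator (T : E → Set (StrongDual ℝ E)) : Prop :=
  Bornology.IsBounded {x | (T x).Nonempty} ∨
    ∃ c : ℝ → ℝ, Tendsto c atTop atTop ∧ ∀ x x', x' ∈ T x → c ‖x‖ * ‖x‖ ≤ x' x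

theorem IsCoerciveOperator.exists_norm_le {T : E → Set (StrongDual ℝ E)}
    (hT : IsCoerciveOperator T) (M : ℝ) :
    ∃ R, ∀ x v, v ∈ T x → v x ≤ M * ‖x‖ → ‖x‖ ≤ R := by
  rcases hT with hbdd | ⟨c, hc, hcx⟩
  · obtain ⟨R, hR⟩ := hbdd.exists_norm_le
    exact ⟨R, fun x v hv _ => hR x ⟨v, hv⟩⟩
  · obtain ⟨R, hR⟩ := eventually_atTop.1 (hc.eventually_gt_atTop M)
    refine ⟨max R 0, fun x v hv hvx => le_of_not_gt fun hlt => ?_⟩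
    have hpos : 0 < ‖x‖ := (le_max_right _ _).trans_lt hlt
    have := mul_lt_mul_of_pos_right (hR ‖x‖ ((le_max_left _ _).trans hlt.le)) hpos
    linarith [hcx x v hv]

end MaximalMonotone

theorem surjective_of_coercive_maximal_monotone_general
    {E : Type*} [NormedAddCommGroup E] [NormedSpace ℝ E]
    (hrefl : Function.Surjective (inclusionInDoubleDual ℝ E))
    (T : E → Set (StrongDual ℝ E))
    (hmono : ∀ x y x' y', x' ∈ T x → y' ∈ T y → 0 ≤ (x' - y') (x - y))
    (hmax : ∀ x x', (∀ y y', y' ∈ T y → 0 ≤ (x' - y') (x - y)) → x' ∈ T x)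
    (hcoer : Bornology.IsBounded {x | (T x).Nonempty} ∨
      ∃ c : ℝ → ℝ, Tendsto c atTop atTop ∧ ∀ x x', x' ∈ T x → c ‖x‖ * ‖x‖ ≤ x' x) :
    (⋃ x, T x) = Set.univ := by
  have hG : IsMaximalMonotone {p : E × StrongDual ℝ E | p.2 ∈ T p.1} := fun p =>
    ⟨fun hp q hq => hmono _ _ _ _ hp hq, fun hp => hmax _ _ fun y y' hy => hp (y, y') hy⟩
  refine Set.eq_univ_of_forall fun w => Set.mem_iUnion.2 ?_
  choose p hpG hpw hpnorm using fun n : ℕ =>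
    hG.exists_mem_norm_sub_eq_smul hrefl w (Nat.one_div_pos_of_nat (n := n))
  obtain ⟨R, hR⟩ := IsCoerciveOperator.exists_norm_le hcoer ‖w‖
  have hbound : ∀ n, ‖(p n).1‖ ≤ R := fun n => hR _ _ (hpG n) <| by
    have := hpw n
    rw [sub_apply, sub_nonpos] at this
    exact this.trans ((le_abs_self _).trans (w.le_opNorm _))
  obtain ⟨x₀, hx₀⟩ := exists_mapClusterPt_toWeakSpace_of_norm_le hrefl (l := atTop) hbound
  have hv : Tendsto (fun n => (p n).2) atTop (𝓝 w) := by
    refine tendsto_iff_norm_sub_tendsto_zero.2 (squeeze_zero (fun n => norm_nonneg _)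
      (fun n => (hpnorm n).trans_le (mul_le_mul_of_nonneg_left (hbound n) (by positivity))) ?_)
    simpa using tendsto_one_div_add_atTop_nhds_zero_nat.mul_const R
  exact ⟨x₀, hG.mem_of_mapClusterPt (fun n => hpG n) hbound hv hx₀⟩

/-- If `E` is a reflexive real Banach space and `T : E → 2^{E*}` is a coercive maximal
monotone operator, then `R(T) = E*`. -/
theorem surjective_of_coercive_maximal_monotone
    {E : Type*} [NormedAddCommGroup E] [NormedSpace ℝ E] [CompleteSpace E]
    (hrefl : Function.Surjective (inclusionInDoubleDual ℝ E))
    (T : E → Set (StrongDual ℝ E))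
    (hmono : ∀ x y x' y', x' ∈ T x → y' ∈ T y → 0 ≤ (x' - y') (x - y))
    (hmax : ∀ x x', (∀ y y', y' ∈ T y → 0 ≤ (x' - y') (x - y)) → x' ∈ T x)
    (hcoer : Bornology.IsBounded {x | (T x).Nonempty} ∨
      ∃ c : ℝ → ℝ, Tendsto c atTop atTop ∧ ∀ x x', x' ∈ T x → c ‖x‖ * ‖x‖ ≤ x' x) :
    (⋃ x, T x) = Set.univ :=
  surjective_of_coercive_maximal_monotone_general hrefl T hmono hmax hcoer
end

section
/- Let T : E → 2^{E*} be a maximal monotone operator on a real Banach space E and suppose that either (i) R(T) = E*, or (ii) the norm closure of R(T) equals E* and T is coercive. Then T is locally maximal monotone. -/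
open Filter Topology

/-!
To get `x' ∈ T x` from maximality we must show `0 ≤ (x' - y') (x - y)` for every `y' ∈ T y`.
For small `t ∈ (0, 1)` the point `w₀ = x' - t • (x' - y')` lies in `U`. If `w₀ ∈ T z`, then
the hypothesis on `(x, x')` gives `0 ≤ t * (x' - y') (x - z)` and monotonicity gives
`0 ≤ (1 - t) * (x' - y') (z - y)`; adding the two yields the claim. In general `w₀` is only a
limit of values `w ∈ T z`; coercivity (or a bounded domain) keeps the points `z` bounded, so the
error terms, of size `‖w - w₀‖ * ‖z‖`, still tend to zero.
-/

section

variable {E : Type*} [NormedAddCommGroup E] [NormedSpace ℝ E]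

theorem apply_sub_ge_of_nonneg_pairings {x y z : E} {x' y' w : StrongDual ℝ E} {t : ℝ}
    (ht₀ : 0 < t) (ht₁ : t < 1)
    (hxz : 0 ≤ (x' - w) (x - z)) (hzy : 0 ≤ (w - y') (z - y)) :
    -(‖w - (x' - t • (x' - y'))‖ * (‖x - z‖ / t + ‖z - y‖ / (1 - t))) ≤ (x' - y') (x - y) := by
  set a := x' - y'
  set e := w - (x' - t • a)
  have hxw : x' - w = t • a - e := by simp only [e]; abel
  have hwy : w - y' = (1 - t) • a + e := by simp only [e, a]; module
  rw [hxw] at hxz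
  rw [hwy] at hzy
  simp only [sub_apply, add_apply, smul_apply, smul_eq_mul] at hxz hzy
  have hexz := neg_le_of_abs_le (e.le_opNorm (x - z))
  have hezy := le_of_abs_le (e.le_opNorm (z - y))
  have h₁ : -(‖e‖ * ‖x - z‖) / t ≤ a (x - z) := by
    rw [div_le_iff₀ ht₀]; linarith
  have h₂ : -(‖e‖ * ‖z - y‖) / (1 - t) ≤ a (z - y) := by
    rw [div_le_iff₀ (sub_pos.mpr ht₁)]; linarith
  have hsplit : a (x - y) = a (x - z) + a (z - y) := by
    rw [← map_add, sub_add_sub_cancel]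
  rw [hsplit, mul_add, neg_add, ← mul_div_assoc, ← mul_div_assoc, ← neg_div, ← neg_div]
  exact add_le_add h₁ h₂

theorem apply_sub_nonneg_of_mem_closure_biUnion_closedBall
    {T : E → Set (StrongDual ℝ E)}
    (hmono : ∀ x y x' y', x' ∈ T x → y' ∈ T y → 0 ≤ (x' - y') (x - y))
    (happrox : ∀ w₀, ∃ M, w₀ ∈ closure (⋃ z ∈ Metric.closedBall (0 : E) M, T z))
    {U : Set (StrongDual ℝ E)} (hU : IsOpen U) {x y : E} {x' y' : StrongDual ℝ E}
    (hx'U : x' ∈ U) (hx : ∀ z w, w ∈ T z → w ∈ U → 0 ≤ (x' - w) (x - z)) (hy : y' ∈ T y) :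
    0 ≤ (x' - y') (x - y) := by
  have hpath : Tendsto (fun t : ℝ ↦ x' - t • (x' - y')) (𝓝[>] 0) (𝓝 x') := by
    have hcont : Continuous fun t : ℝ ↦ x' - t • (x' - y') := by fun_prop
    simpa using (hcont.tendsto 0).mono_left nhdsWithin_le_nhds
  have hsmall : ∀ᶠ t in 𝓝[>] (0 : ℝ), t < 1 := nhdsWithin_le_nhds (Iio_mem_nhds one_pos)
  have hpos : ∀ᶠ t in 𝓝[>] (0 : ℝ), 0 < t := self_mem_nhdsWithin
  obtain ⟨t, hw₀U, ht₁, ht₀⟩ :=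
    ((hpath.eventually (hU.mem_nhds hx'U)).and (hsmall.and hpos)).exists
  set w₀ := x' - t • (x' - y')
  obtain ⟨M, hM⟩ := happrox w₀
  set K := (‖x‖ + M) / t + (M + ‖y‖) / (1 - t)
  have hbound : U ∩ ⋃ z ∈ Metric.closedBall (0 : E) M, T z ⊆
      {w | -(‖w - w₀‖ * K) ≤ (x' - y') (x - y)} := by
    rintro w ⟨hwU, hw⟩
    simp only [Set.mem_iUnion, Metric.mem_closedBall, dist_zero_right] at hw
    obtain ⟨z, hzM, hwz⟩ := hw
    have hK : ‖x - z‖ / t + ‖z - y‖ / (1 - t) ≤ K := by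
      show _ ≤ (‖x‖ + M) / t + (M + ‖y‖) / (1 - t)
      have := sub_pos.mpr ht₁
      gcongr
      · exact (norm_sub_le x z).trans (by linarith)
      · exact (norm_sub_le z y).trans (by linarith)
    have := apply_sub_ge_of_nonneg_pairings ht₀ ht₁ (hx z w hwz hwU) (hmono z y w y' hwz hy)
    exact le_trans (neg_le_neg (mul_le_mul_of_nonneg_left hK (norm_nonneg _))) this
  -- the error bound is a closed condition on `w`, so it survives the limit `w → w₀`
  have hclosed : IsClosed {w | -(‖w - w₀‖ * K) ≤ (x' - y') (x - y)} :=
    isClosed_le (by fun_prop) continuous_const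
  have := closure_minimal hbound hclosed (hU.inter_closure ⟨hw₀U, hM⟩)
  simpa using this

def BoundedPreimages (T : E → Set (StrongDual ℝ E)) : Prop :=
  ∀ R, ∃ M, ∀ z, ∀ w ∈ T z, ‖w‖ ≤ R → ‖z‖ ≤ M

theorem boundedPreimages_of_isBounded_domain {T : E → Set (StrongDual ℝ E)}
    (hT : Bornology.IsBounded {x | (T x).Nonempty}) : BoundedPreimages T := by
  obtain ⟨M, hM⟩ := isBounded_iff_forall_norm_le.mp hT
  exact fun _ ↦ ⟨M, fun z w hw _ ↦ hM z ⟨w, hw⟩⟩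

theorem boundedPreimages_of_coercive {T : E → Set (StrongDual ℝ E)} {c : ℝ → ℝ}
    (hc : Tendsto c atTop atTop) (hT : ∀ x x', x' ∈ T x → c ‖x‖ * ‖x‖ ≤ x' x) :
    BoundedPreimages T := by
  intro R
  obtain ⟨M, hM⟩ := eventually_atTop.mp (hc.eventually_gt_atTop R)
  refine ⟨max M 1, fun z w hw hwR ↦ ?_⟩
  by_contra! hz
  have hz₁ : 1 < ‖z‖ := (le_max_right M 1).trans_lt hz
  have hcz : R < c ‖z‖ := hM _ ((le_max_left M 1).trans hz.le)
  have hwz : w z ≤ ‖w‖ * ‖z‖ := (le_abs_self _).trans (w.le_opNorm z)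
  nlinarith [hT z w hw]

theorem exists_mem_closure_biUnion_closedBall {T : E → Set (StrongDual ℝ E)}
    (hT : BoundedPreimages T) {w₀ : StrongDual ℝ E} (hw₀ : w₀ ∈ closure (⋃ x, T x)) :
    ∃ M, w₀ ∈ closure (⋃ z ∈ Metric.closedBall (0 : E) M, T z) := by
  obtain ⟨M, hM⟩ := hT (‖w₀‖ + 1)
  refine ⟨M, closure_mono ?_
    (Metric.isOpen_ball.inter_closure ⟨Metric.mem_ball_self one_pos, hw₀⟩)⟩
  rintro w ⟨hw₁, hw⟩
  obtain ⟨z, hwz⟩ := Set.mem_iUnion.mp hw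
  have hwR : ‖w‖ ≤ ‖w₀‖ + 1 := by
    have := norm_le_of_mem_closedBall (Metric.ball_subset_closedBall hw₁)
    linarith
  exact Set.mem_biUnion (x := z) (by simpa using hM z w hwz hwR) hwz

end

theorem locally_maximal_monotone_of_range_conditions_general
    {E : Type*} [NormedAddCommGroup E] [NormedSpace ℝ E]
    (T : E → Set (StrongDual ℝ E))
    (hmono : ∀ x y x' y', x' ∈ T x → y' ∈ T y → 0 ≤ (x' - y') (x - y))
    (hmax : ∀ x x', (∀ y y', y' ∈ T y → 0 ≤ (x' - y') (x - y)) → x' ∈ T x)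
    (hrange : (⋃ x, T x) = Set.univ ∨
      (closure (⋃ x, T x) = Set.univ ∧
        (Bornology.IsBounded {x | (T x).Nonempty} ∨
          ∃ c : ℝ → ℝ, Tendsto c atTop atTop ∧ ∀ x x', x' ∈ T x → c ‖x‖ * ‖x‖ ≤ x' x))) :
    ∀ U : Set (StrongDual ℝ E), IsOpen U → Convex ℝ U → (U ∩ ⋃ x, T x).Nonempty →
      ∀ (x : E) (x' : StrongDual ℝ E), x' ∈ U →
        (∀ y y', y' ∈ T y → y' ∈ U → 0 ≤ (x' - y') (x - y)) → x' ∈ T x := by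
  intro U hU _ _ x x' hx'U hx
  have happrox : ∀ w₀, ∃ M, w₀ ∈ closure (⋃ z ∈ Metric.closedBall (0 : E) M, T z) := by
    intro w₀
    rcases hrange with hsurj | ⟨hdense, hbdd | ⟨c, hc, hcoer⟩⟩
    · obtain ⟨z, hz⟩ := Set.mem_iUnion.mp (hsurj ▸ Set.mem_univ w₀)
      exact ⟨‖z‖, subset_closure (Set.mem_biUnion (x := z) (by simp) hz)⟩
    · exact exists_mem_closure_biUnion_closedBall
        (boundedPreimages_of_isBounded_domain hbdd) (hdense ▸ Set.mem_univ w₀)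
    · exact exists_mem_closure_biUnion_closedBall
        (boundedPreimages_of_coercive hc hcoer) (hdense ▸ Set.mem_univ w₀)
  exact hmax x x' fun y y' hy ↦ apply_sub_nonneg_of_mem_closure_biUnion_closedBall hmono happrox
    hU hx'U hx hy

/-- If `T : E → 2^{E*}` is maximal monotone and either (i) `R(T) = E*`, or (ii) the norm
closure of `R(T)` is `E*` and `T` is coercive, then `T` is locally maximal monotone: for
every norm-open convex `U ⊆ E*` meeting `R(T)` and every `(x, x*) ∈ E × U` monotonically
related to `G(T) ∩ (E × U)`, one has `x* ∈ T x`. -/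
theorem locally_maximal_monotone_of_range_conditions
    {E : Type*} [NormedAddCommGroup E] [NormedSpace ℝ E] [CompleteSpace E]
    (T : E → Set (StrongDual ℝ E))
    (hmono : ∀ x y x' y', x' ∈ T x → y' ∈ T y → 0 ≤ (x' - y') (x - y))
    (hmax : ∀ x x', (∀ y y', y' ∈ T y → 0 ≤ (x' - y') (x - y)) → x' ∈ T x)
    (hrange : (⋃ x, T x) = Set.univ ∨
      (closure (⋃ x, T x) = Set.univ ∧
        (Bornology.IsBounded {x | (T x).Nonempty} ∨
          ∃ c : ℝ → ℝ, Tendsto c atTop atTop ∧ ∀ x x', x' ∈ T x → c ‖x‖ * ‖x‖ ≤ x' x))) :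
    ∀ U : Set (StrongDual ℝ E), IsOpen U → Convex ℝ U → (U ∩ ⋃ x, T x).Nonempty →
      ∀ (x : E) (x' : StrongDual ℝ E), x' ∈ U →
        (∀ y y', y' ∈ T y → y' ∈ U → 0 ≤ (x' - y') (x - y)) → x' ∈ T x :=
  locally_maximal_monotone_of_range_conditions_general T hmono hmax hrange
end
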